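/- Fix a positive integer d and v ∈ I(d). Let β > γ be (not necessarily consecutive) elements of a v-chain C, and let E be a strictly decreasing chain (under >) of elements of 𝔖_C with last element q_{C,γ} and of length odepth_C(γ). Then q_{C,β} occurs in E. -/

import Mathlib

namespace OG

/-- `star d k = k* = 2d+1-k`. -/
def star (d k : ℕ) : ℕ := 2 * d + 1 - k

/-- `I(d,2d)`: the set of `d`-element subsets of `{1,…,2d}`. -/
def Idn (d : ℕ) : Set (Finset ℕ) :=
  {v | v.card = d ∧ ∀ k ∈ v, 1 ≤ k ∧ k ≤ 2 * d}

/-- The partial order on `I(d,2d)`: entrywise comparison of increasing enumerations. -/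
def leI (x y : Finset ℕ) : Prop :=
  List.Forall₂ (· ≤ ·) (x.sort (· ≤ ·)) (y.sort (· ≤ ·))

/-- `I(d)`: elements of `I(d,2d)` containing exactly one of `k`, `k*` for each `k`,
with evenly many entries exceeding `d`. -/
def Iset (d : ℕ) : Set (Finset ℕ) :=
  {v | v ∈ Idn d ∧ (∀ k, 1 ≤ k → k ≤ 2 * d → (k ∈ v ↔ star d k ∉ v)) ∧
       Even ((v.filter (fun k => d < k)).card)}

/-- membership in `N(v)`. -/
def inN (d : ℕ) (v : Finset ℕ) (p : ℕ × ℕ) : Prop :=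
  1 ≤ p.1 ∧ p.1 ≤ 2 * d ∧ 1 ≤ p.2 ∧ p.2 ≤ 2 * d ∧ p.1 ∉ v ∧ p.2 ∈ v ∧ p.2 < p.1

/-- membership in `OR(v)`. -/
def inOR (d : ℕ) (v : Finset ℕ) (p : ℕ × ℕ) : Prop :=
  1 ≤ p.1 ∧ p.1 ≤ 2 * d ∧ 1 ≤ p.2 ∧ p.2 ≤ 2 * d ∧ p.1 ∉ v ∧ p.2 ∈ v ∧ p.1 < star d p.2

/-- membership in `ON(v) = OR(v) ∩ N(v)`. -/
def inON (d : ℕ) (v : Finset ℕ) (p : ℕ × ℕ) : Prop := inN d v p ∧ inOR d v p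

/-- membership in the diagonal `D(v)`. -/
def inDiag (d : ℕ) (v : Finset ℕ) (p : ℕ × ℕ) : Prop :=
  p.1 ∉ v ∧ p.2 ∈ v ∧ p.1 = star d p.2

instance (d : ℕ) (v : Finset ℕ) : DecidablePred (inN d v) := fun p => by
  unfold inN; infer_instance

instance (d : ℕ) (v : Finset ℕ) : DecidablePred (inOR d v) := fun p => by
  unfold inOR; infer_instance

instance (d : ℕ) (v : Finset ℕ) : DecidablePred (inON d v) := fun p => by
  unfold inON; infer_instance

instance (d : ℕ) (v : Finset ℕ) : DecidablePred (inDiag d v) := fun p => by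
  unfold inDiag; infer_instance

/-- `(R,C) > (r,c)` iff `R > r` and `C < c`. -/
def pgt (A B : ℕ × ℕ) : Prop := B.1 < A.1 ∧ A.2 < B.2

instance : DecidableRel pgt := fun A B => by unfold pgt; infer_instance

/-- `(R,C)` dominates `(r,c)` iff `R ≥ r` and `C ≤ c`. -/
def pdom (A B : ℕ × ℕ) : Prop := B.1 ≤ A.1 ∧ A.2 ≤ B.2

/-- vertical projection `p_v(r,c) = (c*,c)`. -/
def pv (d : ℕ) (α : ℕ × ℕ) : ℕ × ℕ := (star d α.2, α.2)

/-- horizontal projection `p_h(r,c) = (r,r*)`. -/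
def ph (d : ℕ) (α : ℕ × ℕ) : ℕ × ℕ := (α.1, star d α.1)

/-- `(r,c)^# = (c*,r*)`. -/
def hash (d : ℕ) (α : ℕ × ℕ) : ℕ × ℕ := (star d α.2, star d α.1)

/-- A `v`-chain: a strictly decreasing (under `pgt`) list of elements of `ON(v)`. -/
def IsVChain (d : ℕ) (v : Finset ℕ) (C : List (ℕ × ℕ)) : Prop :=
  C.Chain' pgt ∧ ∀ α ∈ C, inON d v α

/-- Two consecutive elements `(r,c) > (R,C)` of a `v`-chain are connected
if `r* ≥ C` and `R > r*`. -/
def Connected (d : ℕ) (α β : ℕ × ℕ) : Prop :=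
  β.2 ≤ star d α.1 ∧ star d α.1 < β.1

instance (d : ℕ) : ∀ α β, Decidable (Connected d α β) := fun α β => by
  unfold Connected; infer_instance

/-- The connected components of a `v`-chain. -/
def components (d : ℕ) (C : List (ℕ × ℕ)) : List (List (ℕ × ℕ)) :=
  C.splitBy (fun a b => decide (Connected d a b))

/-- The three possible types of an element of a `v`-chain. -/
inductive VType | V | H | S
deriving DecidableEq

/-- The type of an element `α` of a `v`-chain `C`: type V if `α` is not the last element
of its connected component or that component has even cardinality; otherwise type H if
`p_h(α) ∈ N(v)` (i.e. `r > r*`) and type S if not. -/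
def typeOf (d : ℕ) (C : List (ℕ × ℕ)) (α : ℕ × ℕ) : VType :=
  match (components d C).find? (fun g => decide (α ∈ g)) with
  | some g =>
      if g.getLast? = some α ∧ Odd g.length then
        (if star d α.1 < α.1 then VType.H else VType.S)
      else VType.V
  | none => VType.V

/-- `𝔖_{C,α}`. -/
def SCa (d : ℕ) (C : List (ℕ × ℕ)) (α : ℕ × ℕ) : Multiset (ℕ × ℕ) :=
  match typeOf d C α with
  | VType.V => {pv d α}
  | VType.H => {pv d α, ph d α}
  | VType.S => {α, hash d α}

/-- `𝔖_C`: the multiset union of the `𝔖_{C,α}` over `α ∈ C`. -/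
def SC (d : ℕ) (C : List (ℕ × ℕ)) : Multiset (ℕ × ℕ) :=
  (C.map (fun α => SCa d C α)).sum

/-- `q_{C,α}`. -/
def qCa (d : ℕ) (C : List (ℕ × ℕ)) (α : ℕ × ℕ) : ℕ × ℕ :=
  match typeOf d C α with
  | VType.S => α
  | _ => pv d α

/-- A strictly decreasing chain of elements of the monomial `S`. -/
def IsChainIn (S : Multiset (ℕ × ℕ)) (L : List (ℕ × ℕ)) : Prop :=
  L.Chain' pgt ∧ ∀ β ∈ L, β ∈ S

/-- The depth of `α` in a monomial `S` of `N(v)`: the maximal length of a strictly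
decreasing chain of elements of `S` ending at `α`. -/
noncomputable def depth (S : Multiset (ℕ × ℕ)) (α : ℕ × ℕ) : ℕ :=
  sSup {k | ∃ L, IsChainIn S L ∧ L.getLast? = some α ∧ L.length = k}

/-- The o-depth of `α` in a `v`-chain `C`: the depth of `q_{C,α}` in `𝔖_C`. -/
noncomputable def odepthC (d : ℕ) (C : List (ℕ × ℕ)) (α : ℕ × ℕ) : ℕ :=
  depth (SC d C) (qCa d C α)

/-- The o-depth of `α` in a monomial `S` of `ON(v)`: the maximum of `odepthC` over
all `v`-chains in `S` containing `α`. -/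
noncomputable def odepthM (d : ℕ) (v : Finset ℕ) (S : Multiset (ℕ × ℕ)) (α : ℕ × ℕ) : ℕ :=
  sSup {k | ∃ C, IsVChain d v C ∧ (∀ β ∈ C, β ∈ S) ∧ α ∈ C ∧ odepthC d C α = k}

/-- A distinguished subset of `N(v)`. -/
def Distinguished (d : ℕ) (v : Finset ℕ) (S : Finset (ℕ × ℕ)) : Prop :=
  (∀ p ∈ S, inN d v p) ∧
  ∀ A ∈ S, ∀ B ∈ S, A ≠ B →
    A.1 ≠ B.1 ∧ A.2 ≠ B.2 ∧ (B.1 < A.1 → (B.1 < A.2 ∨ A.2 < B.2))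

/-- The element of `I(d,2d)` attached to a distinguished subset `S` of `N(v)`:
remove from `v` the column indices of elements of `S` and add their row indices. -/
def toW (v : Finset ℕ) (S : Finset (ℕ × ℕ)) : Finset ℕ :=
  (v \ S.image Prod.snd) ∪ S.image Prod.fst

/-- `w(C) = w_C`, the element of `I(d,2d)` attached to the `v`-chain `C` via the
distinguished subset `𝔖_C`. -/
def wC (d : ℕ) (v : Finset ℕ) (C : List (ℕ × ℕ)) : Finset ℕ :=
  toW v (SC d C).toFinset

/-- `w` ortho-dominates a monomial `S` in `ON(v)`: `w ≥ w(C)` for every `v`-chain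
`C` contained in `S`. -/
def ODominates (d : ℕ) (v w : Finset ℕ) (S : Multiset (ℕ × ℕ)) : Prop :=
  ∀ C : List (ℕ × ℕ), IsVChain d v C → (∀ β ∈ C, β ∈ S) → leI (wC d v C) w

/-- `x` dominates a monomial `S` in `N(v)` (in the sense of the Grassmannian case):
`x ≥ w_L` for every strictly decreasing chain `L` contained in `S`. -/
def Dominates (d : ℕ) (v x : Finset ℕ) (S : Multiset (ℕ × ℕ)) : Prop :=
  ∀ L : List (ℕ × ℕ), L.Chain' pgt → (∀ β ∈ L, β ∈ S) → leI (toW v L.toFinset) x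

/-- The `v`-degree of `θ`: half the cardinality of `v \ θ`. -/
def vdeg (v θ : Finset ℕ) : ℕ := (v \ θ).card / 2

/-- the element next to `α` in the list `C`. -/
def nextInC (C : List (ℕ × ℕ)) (α : ℕ × ℕ) : Option (ℕ × ℕ) :=
  C[C.idxOf α + 1]?

/-- The critical element of a `v`-chain: its first element whose horizontal projection
does not belong to `N(v)` (i.e. with `r ≤ r*`). -/
def critical (d : ℕ) (C : List (ℕ × ℕ)) : Option (ℕ × ℕ) :=
  C.find? (fun x => decide (x.1 ≤ star d x.1))

/-- `α` is the last element of its connected component in `C`. -/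
def isCompLast (d : ℕ) (C : List (ℕ × ℕ)) (α : ℕ × ℕ) : Prop :=
  ∃ g ∈ components d C, g.getLast? = some α

/-- The condition (*): `α` has type H in `C` and `p_h(α) ≯ β'` for some `β' ∈ 𝔖_{C,β}`. -/
def starCond (d : ℕ) (C : List (ℕ × ℕ)) (α β : ℕ × ℕ) : Prop :=
  typeOf d C α = VType.H ∧ ∃ β' ∈ SCa d C β, ¬ pgt (ph d α) β'

/-- A standard monomial in `I(d)`: a weakly decreasing sequence of elements of `I(d)`. -/
def IsStdMon (d : ℕ) (L : List (Finset ℕ)) : Prop :=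
  (∀ θ ∈ L, θ ∈ Iset d) ∧ L.Chain' (fun a b => leI b a)

/-- A standard monomial is `w`-dominated if `w ≥ θ₁`. -/
def WDominated (w : Finset ℕ) (L : List (Finset ℕ)) : Prop :=
  ∀ θ, L.head? = some θ → leI θ w

/-- A standard monomial is `v`-compatible if each member is comparable with `v`
and distinct from `v`. -/
def VCompatible (v : Finset ℕ) (L : List (Finset ℕ)) : Prop :=
  ∀ θ ∈ L, θ ≠ v ∧ (leI θ v ∨ leI v θ)

/-- The degree of a standard monomial: the sum of the `v`-degrees of its members. -/
def stdDeg (v : Finset ℕ) (L : List (Finset ℕ)) : ℕ :=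
  (L.map (fun θ => vdeg v θ)).sum

end OG

/-!
Every element of `𝔖_C` strictly above `q = q_{C,γ}` is either a projection `p_v(α)`, `p_h(α)`,
which lies on the antidiagonal `r + c = 2d + 1`, or an element `α` of type S of `C` itself
(the elements `α^#` have column `> d` and never lie above `q`). Antidiagonal points are pairwise
comparable, so are elements of `C`, and an antidiagonal point lies above every type-S element
above `q`: for `p_h(α)` this is where the connectivity of `α` with its successor enters. Hence
the elements of `𝔖_C` above `q` form a chain `U`, the depth of `q` is `|U| + 1`, and a chain of
that length ending at `q` must contain all of `U`, in particular `q_{C,β}`, which lies above `q`.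
-/

namespace List

variable {α : Type*}

theorem Nodup.append_cons_inj {s₁ t₁ s₂ t₂ : List α} {a : α} (hn : (s₁ ++ a :: t₁).Nodup)
    (h : s₁ ++ a :: t₁ = s₂ ++ a :: t₂) : s₁ = s₂ ∧ t₁ = t₂ := by
  classical
  have h₁ : a ∉ s₁ := fun ha => (nodup_append.1 hn).2.2 _ ha _ mem_cons_self rfl
  have h₂ : a ∉ s₂ := fun ha => (nodup_append.1 (h ▸ hn)).2.2 _ ha _ mem_cons_self rfl
  have hlen : s₁.length = s₂.length := by
    simpa [idxOf_append_of_notMem h₁, idxOf_append_of_notMem h₂] using congrArg (idxOf a) h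
  simpa using append_inj h hlen

theorem eq_singleton_of_mem_splitBy {r : α → α → Bool} {l g : List α} {a : α}
    (hg : g ∈ l.splitBy r) (ha : a ∈ g)
    (hprev : ∀ s x t, l = s ++ x :: a :: t → r x a = false)
    (hnext : ∀ s x t, l = s ++ a :: x :: t → r a x = false) : g = [a] := by
  have hinf : g <:+: l := flatten_splitBy r l ▸ infix_of_mem_flatten hg
  have hchain := isChain_of_mem_splitBy hg
  have pair_infix : ∀ x y u w, g = u ++ x :: y :: w →
      r x y = true ∧ ∃ s t, l = s ++ x :: y :: t := by
    rintro x y u w rfl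
    have hxy : [x, y] <:+: u ++ x :: y :: w := ⟨u, w, by simp⟩
    obtain ⟨s, t, hst⟩ := hxy.trans hinf
    refine ⟨(isChain_pair (R := fun x y => r x y = true)).1 (hchain.infix hxy), s, t, ?_⟩
    rw [← hst]; simp
  obtain ⟨u, w, rfl⟩ := append_of_mem ha
  obtain rfl | ⟨u, x, rfl⟩ := eq_nil_or_concat u
  · cases w with
    | nil => rfl
    | cons x w =>
      obtain ⟨hr, s, t, hl⟩ := pair_infix a x [] w rfl
      simp [hnext s x t hl] at hr
  · obtain ⟨hr, s, t, hl⟩ := pair_infix x a u w (by simp)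
    simp [hprev s x t hl] at hr

theorem Nodup.rel_eq_false_of_getLast_mem_splitBy {r : α → α → Bool} {l g s t : List α}
    {a b : α} (hl : l.Nodup) (hg : g ∈ l.splitBy r) (ha : g.getLast? = some a)
    (hab : l = s ++ a :: b :: t) : r a b = false := by
  obtain ⟨p, q, hpq⟩ := append_of_mem hg
  obtain ⟨g, rfl⟩ := getLast?_eq_some_iff.1 ha
  have hflat : l = (p.flatten ++ g) ++ a :: q.flatten := by
    rw [← flatten_splitBy r l, hpq]; simp
  have hq : b :: t = q.flatten := (Nodup.append_cons_inj (hab ▸ hl) (hab.symm.trans hflat)).2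
  obtain _ | ⟨_ | ⟨b', h⟩, q⟩ := q
  · simp at hq
  · exact absurd (by rw [hpq]; simp) (nil_notMem_splitBy r l)
  · obtain rfl : b' = b := by simp at hq; exact hq.1.symm
    have hbnd := (hpq ▸ isChain_getLast_head_splitBy r l).infix
      (⟨p, q, by simp⟩ : [g ++ [a], b' :: h] <:+: p ++ (g ++ [a]) :: (b' :: h) :: q)
    obtain ⟨_, _, H⟩ := isChain_pair.1 hbnd
    simpa using H

end List

namespace OG

instance : IsStrictOrder (ℕ × ℕ) pgt where
  irrefl _ h := lt_irrefl _ h.1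
  trans _ _ _ h₁ h₂ := ⟨h₂.1.trans h₁.1, h₁.2.trans h₂.2⟩

theorem pgt_trichotomous_of_add_eq {x y : ℕ × ℕ} (h : x.1 + x.2 = y.1 + y.2) :
    x = y ∨ pgt x y ∨ pgt y x := by
  unfold pgt
  rcases lt_trichotomy x.1 y.1 with h₁ | h₁ | h₁
  · exact Or.inr (Or.inr ⟨h₁, by omega⟩)
  · exact Or.inl (Prod.ext h₁ (by omega))
  · exact Or.inr (Or.inl ⟨h₁, by omega⟩)

theorem exists_pairwise_pgt_of_isChain {U : Finset (ℕ × ℕ)}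
    (hU : IsChain pgt (U : Set (ℕ × ℕ))) :
    ∃ L : List (ℕ × ℕ), L.Pairwise pgt ∧ L.toFinset = U ∧ L.length = U.card := by
  -- on a `pgt`-chain, `pgt` is the order of decreasing rows
  set L := U.toList.mergeSort (fun x y => decide (y.1 ≤ x.1))
  have hperm : L.Perm U.toList := List.mergeSort_perm _ _
  have hsorted : L.Pairwise (fun x y => decide (y.1 ≤ x.1)) :=
    List.pairwise_mergeSort (by simp; omega) (by simp; omega) _
  have hcomp : L.Pairwise (fun x y => pgt x y ∨ pgt y x) :=
    (hperm.nodup_iff.2 U.nodup_toList).pairwise_of_set_pairwise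
      (hU.mono fun x hx => by simpa using hperm.subset hx)
  refine ⟨L, (hsorted.and hcomp).imp fun h => h.2.resolve_right fun h' =>
    absurd h'.1 (not_lt.2 (by simpa using h.1)), ?_, ?_⟩
  · ext x; simp [hperm.mem_iff]
  · rw [hperm.length_eq, Finset.length_toList]

def above (S : Multiset (ℕ × ℕ)) (q : ℕ × ℕ) : Finset (ℕ × ℕ) :=
  S.toFinset.filter (pgt · q)

section Depth

variable {S : Multiset (ℕ × ℕ)} {E : List (ℕ × ℕ)} {q : ℕ × ℕ}

theorem IsChainIn.exists_eq_append (hE : IsChainIn S E) (hlast : E.getLast? = some q) :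
    ∃ F, E = F ++ [q] ∧ F.Nodup ∧ F.toFinset ⊆ above S q := by
  obtain ⟨F, rfl⟩ := List.getLast?_eq_some_iff.1 hlast
  obtain ⟨hF, -, hFq⟩ := List.pairwise_append.1 (List.isChain_iff_pairwise.1 hE.1)
  refine ⟨F, rfl, hF.nodup, fun x hx => ?_⟩
  rw [List.mem_toFinset] at hx
  exact Finset.mem_filter.2
    ⟨Multiset.mem_toFinset.2 (hE.2 x (by simp [hx])), hFq x hx q (by simp)⟩

theorem IsChainIn.length_le_card_above (hE : IsChainIn S E) (hlast : E.getLast? = some q) :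
    E.length ≤ (above S q).card + 1 := by
  obtain ⟨F, rfl, hF, hFU⟩ := hE.exists_eq_append hlast
  simpa [← List.toFinset_card_of_nodup hF] using Finset.card_le_card hFU

theorem exists_isChainIn_length_eq (hq : q ∈ S) (hU : IsChain pgt (above S q : Set (ℕ × ℕ))) :
    ∃ E, IsChainIn S E ∧ E.getLast? = some q ∧ E.length = (above S q).card + 1 := by
  obtain ⟨L, hL, hLU, hlen⟩ := exists_pairwise_pgt_of_isChain hU
  have hmem : ∀ x ∈ L, x ∈ S ∧ pgt x q := fun x hx => by
    have : x ∈ above S q := hLU ▸ List.mem_toFinset.2 hx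
    simpa [above] using this
  refine ⟨L ++ [q], ⟨?_, ?_⟩, by simp, by simp [hlen]⟩
  · exact List.isChain_iff_pairwise.2
      (List.pairwise_append.2 ⟨hL, by simp, by simpa using fun x hx => (hmem x hx).2⟩)
  · intro x hx
    rcases List.mem_append.1 hx with hx | hx
    · exact (hmem x hx).1
    · exact List.mem_singleton.1 hx ▸ hq

theorem depth_eq_card_above (hq : q ∈ S) (hU : IsChain pgt (above S q : Set (ℕ × ℕ))) :
    depth S q = (above S q).card + 1 := by
  refine IsGreatest.csSup_eq ⟨exists_isChainIn_length_eq hq hU, ?_⟩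
  rintro k ⟨E, hE, hlast, rfl⟩
  exact hE.length_le_card_above hlast

theorem IsChainIn.mem_of_mem_above (hq : q ∈ S) (hU : IsChain pgt (above S q : Set (ℕ × ℕ)))
    (hE : IsChainIn S E) (hlast : E.getLast? = some q) (hlen : E.length = depth S q)
    {x : ℕ × ℕ} (hx : x ∈ above S q) : x ∈ E := by
  obtain ⟨F, rfl, hF, hFU⟩ := hE.exists_eq_append hlast
  rw [depth_eq_card_above hq hU] at hlen
  have hcard : (above S q).card ≤ F.toFinset.card := by
    simp only [List.length_append, List.length_singleton] at hlen
    rw [List.toFinset_card_of_nodup hF]; omega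
  rw [← Finset.eq_of_subset_of_card_le hFU hcard, List.mem_toFinset] at hx
  exact List.mem_append_left _ hx

end Depth

section VChain

variable {d : ℕ} {v : Finset ℕ} {C : List (ℕ × ℕ)} {a b x : ℕ × ℕ}

theorem IsVChain.pairwise (hC : IsVChain d v C) : C.Pairwise pgt :=
  List.isChain_iff_pairwise.1 hC.1

theorem IsVChain.trichotomous (hC : IsVChain d v C) (ha : a ∈ C) (hb : b ∈ C) :
    a = b ∨ pgt a b ∨ pgt b a := by
  by_cases hab : a = b
  · exact Or.inl hab
  · have : Std.Symm fun x y : ℕ × ℕ => pgt x y ∨ pgt y x := ⟨fun _ _ => Or.symm⟩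
    exact Or.inr (List.Pairwise.forall (R := fun x y => pgt x y ∨ pgt y x)
      (hC.pairwise.imp Or.inl) ha hb hab)

theorem IsVChain.bounds (hC : IsVChain d v C) (ha : a ∈ C) :
    a.2 < a.1 ∧ a.1 + a.2 ≤ 2 * d ∧ a.1 ≤ 2 * d := by
  obtain ⟨⟨-, hr, -, -, -, -, hcr⟩, ⟨-, -, -, -, -, -, hrc⟩⟩ := hC.2 a ha
  unfold star at hrc
  omega

theorem IsVChain.not_pgt_between {s t : List (ℕ × ℕ)} (hC : IsVChain d v C)
    (hsplit : C = s ++ a :: b :: t) (hx : x ∈ C) : ¬ (pgt a x ∧ pgt x b) := by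
  rintro ⟨hax, hxb⟩
  obtain ⟨-, hab, hsab⟩ := List.pairwise_append.1 (hsplit ▸ hC.pairwise)
  rw [hsplit] at hx
  simp only [List.mem_append, List.mem_cons] at hx
  obtain ⟨hat, hbt⟩ := List.pairwise_cons.1 hab
  rcases hx with hx | rfl | rfl | hx
  · exact asymm hax (hsab x hx a (by simp))
  · exact irrefl _ hax
  · exact irrefl _ hxb
  · exact asymm hxb ((List.pairwise_cons.1 hbt).1 x hx)

theorem IsVChain.exists_split_next (hC : IsVChain d v C) (ha : a ∈ C) (hb : b ∈ C)
    (hab : pgt a b) : ∃ s σ t, C = s ++ a :: σ :: t ∧ (σ = b ∨ pgt σ b) := by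
  obtain ⟨s, _ | ⟨σ, t⟩, rfl⟩ := List.append_of_mem ha
  · obtain ⟨-, -, hsa⟩ := List.pairwise_append.1 hC.pairwise
    rcases List.mem_append.1 hb with hb | hb
    · exact absurd (hsa b hb a (by simp)) (asymm hab)
    · exact absurd (List.mem_singleton.1 hb ▸ hab) (irrefl _)
  · refine ⟨s, σ, t, rfl, ?_⟩
    rcases hC.trichotomous (a := σ) (by simp) hb with h | h | h
    · exact Or.inl h
    · exact Or.inr h
    · exact absurd ⟨hab, h⟩ (hC.not_pgt_between rfl hb)

theorem le_of_typeOf_eq_S (h : typeOf d C a = .S) : a.1 ≤ d := by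
  unfold typeOf at h
  split at h <;> (try split_ifs at h) <;> simp_all [star]; omega

theorem lt_of_typeOf_eq_H (h : typeOf d C a = .H) : d < a.1 := by
  unfold typeOf at h
  split at h <;> (try split_ifs at h) <;> simp_all [star]; omega

theorem exists_getLast_of_typeOf_eq_H (h : typeOf d C a = .H) :
    ∃ g ∈ components d C, g.getLast? = some a := by
  unfold typeOf at h
  split at h
  · next g hg =>
    split_ifs at h with hlast
    exact ⟨g, List.mem_of_find?_eq_some hg, hlast.1⟩
  · cases h

/-- `a` forms a one-element component, which has odd length and ends at `a`. -/
theorem typeOf_ne_V_of_not_connected (ha : a ∈ C)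
    (hprev : ∀ s x t, C = s ++ x :: a :: t → ¬ Connected d x a)
    (hnext : ∀ s x t, C = s ++ a :: x :: t → ¬ Connected d a x) : typeOf d C a ≠ .V := by
  have hsingle : ∀ g ∈ components d C, a ∈ g → g = [a] := fun g hg hag =>
    List.eq_singleton_of_mem_splitBy hg hag (by simpa using hprev) (by simpa using hnext)
  unfold typeOf
  split
  · next g hg =>
    obtain rfl := hsingle g (List.mem_of_find?_eq_some hg) (by simpa using List.find?_some hg)
    simp only [List.getLast?_singleton, List.length_singleton, odd_one, and_self, if_true]
    split <;> simp
  · next hnone =>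
    obtain ⟨g, hg, hag⟩ := List.mem_flatten.1 (List.flatten_splitBy _ C ▸ ha)
    simpa [hag] using List.find?_eq_none.1 hnone g hg

theorem IsVChain.not_connected_of_typeOf_eq_H {s t : List (ℕ × ℕ)} (hC : IsVChain d v C)
    (h : typeOf d C a = .H) (hsplit : C = s ++ a :: b :: t) : ¬ Connected d a b := by
  obtain ⟨g, hg, hlast⟩ := exists_getLast_of_typeOf_eq_H h
  simpa using (hC.pairwise.nodup).rel_eq_false_of_getLast_mem_splitBy hg hlast hsplit

theorem IsVChain.typeOf_eq_S_of_pgt {a' : ℕ × ℕ} (hC : IsVChain d v C) (ha' : a' ∈ C)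
    (ha : a ∈ C) (h : pgt a' a) (hS : typeOf d C a' = .S) : typeOf d C a = .S := by
  have ha'd := le_of_typeOf_eq_S hS
  cases hT : typeOf d C a with
  | S => rfl
  | H => exact absurd (lt_of_typeOf_eq_H hT) (by have := h.1; omega)
  | V =>
    -- connecting `y` to its successor needs a row beyond `y.1* ≥ d + 1` when `y.1 ≤ d`
    have had : a.1 < d := lt_of_lt_of_le h.1 ha'd
    refine absurd hT (typeOf_ne_V_of_not_connected ha ?_ ?_)
    · intro s x t hsplit hx
      have hxd : x.1 ≤ d := by
        rcases hC.trichotomous (by rw [hsplit]; simp : x ∈ C) ha' with rfl | hxa' | ha'x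
        · exact ha'd
        · exact absurd ⟨hxa', h⟩ (hC.not_pgt_between hsplit ha')
        · exact (ha'x.1.trans_le ha'd).le
      have hconn := hx.2
      unfold star at hconn
      omega
    · intro s x t hsplit hx
      have hax : pgt a x := (List.pairwise_cons.1 (List.pairwise_append.1
        (hsplit ▸ hC.pairwise)).2.1).1 x (by simp)
      have hconn := hx.2
      have hxa := hax.1
      unfold star at hconn
      omega

end VChain

section SC

variable {d : ℕ} {v : Finset ℕ} {C : List (ℕ × ℕ)} {a a' γ x : ℕ × ℕ}

theorem mem_SC : x ∈ SC d C ↔ ∃ a ∈ C, x ∈ SCa d C a := by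
  rw [SC, ← Multiset.sum_coe, ← Multiset.map_coe]
  exact Multiset.mem_join.trans (by simp)

theorem SCa_of_typeOf_eq_V (h : typeOf d C a = .V) : SCa d C a = {pv d a} := by
  unfold SCa; rw [h]

theorem SCa_of_typeOf_eq_H (h : typeOf d C a = .H) : SCa d C a = {pv d a, ph d a} := by
  unfold SCa; rw [h]

theorem SCa_of_typeOf_eq_S (h : typeOf d C a = .S) : SCa d C a = {a, hash d a} := by
  unfold SCa; rw [h]

theorem qCa_mem_SC (ha : a ∈ C) : qCa d C a ∈ SC d C := by
  refine mem_SC.2 ⟨a, ha, ?_⟩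
  unfold qCa SCa
  cases typeOf d C a <;> simp

theorem qCa_of_typeOf_eq_S (h : typeOf d C a = .S) : qCa d C a = a := by
  unfold qCa; rw [h]

theorem qCa_of_typeOf_ne_S (h : typeOf d C a ≠ .S) : qCa d C a = pv d a := by
  unfold qCa; cases hT : typeOf d C a
  · rfl
  · rfl
  · exact absurd hT h

theorem qCa_snd : (qCa d C a).2 = a.2 := by
  unfold qCa; cases typeOf d C a <;> rfl

theorem IsVChain.add_eq_of_mem_SCa (hC : IsVChain d v C) (ha : a ∈ C)
    (hT : typeOf d C a ≠ .S) (hx : x ∈ SCa d C a) : x.1 + x.2 = 2 * d + 1 := by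
  have := hC.bounds ha
  cases hTa : typeOf d C a
  · rw [SCa_of_typeOf_eq_V hTa, Multiset.mem_singleton] at hx
    simp only [hx, pv, star]; omega
  · rw [SCa_of_typeOf_eq_H hTa] at hx
    rcases (by simpa using hx : x = pv d a ∨ x = ph d a) with rfl | rfl <;>
      simp only [pv, ph, star] <;> omega
  · exact absurd hTa hT

theorem IsVChain.eq_of_mem_SCa_of_pgt_qCa (hC : IsVChain d v C) (hγ : γ ∈ C) (ha : a ∈ C)
    (hT : typeOf d C a = .S) (hx : x ∈ SCa d C a) (hxq : pgt x (qCa d C γ)) : x = a := by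
  rw [SCa_of_typeOf_eq_S hT] at hx
  rcases (by simpa using hx : x = a ∨ x = hash d a) with rfl | rfl
  · rfl
  · have := hxq.2
    rw [qCa_snd] at this
    have := hC.bounds hγ
    have := hC.bounds ha
    have := le_of_typeOf_eq_S hT
    simp only [hash, star] at *
    omega

theorem IsVChain.typeOf_eq_S_of_pgt_qCa (hC : IsVChain d v C) (hγ : γ ∈ C)
    (hS : typeOf d C a' = .S) (h : pgt a' (qCa d C γ)) : typeOf d C γ = .S := by
  by_contra hγS
  have := h.1
  rw [qCa_of_typeOf_ne_S hγS] at this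
  have := hC.bounds hγ
  have := le_of_typeOf_eq_S hS
  simp only [pv, star] at *
  omega

/-- Otherwise `a` would be connected to its successor in `C`, although it ends its component. -/
theorem IsVChain.ph_pgt_of_typeOf_eq_S (hC : IsVChain d v C) (hγ : γ ∈ C) (ha : a ∈ C)
    (ha' : a' ∈ C) (hH : typeOf d C a = .H) (hS : typeOf d C a' = .S)
    (haγ : pgt (ph d a) γ) (ha'γ : pgt a' γ) : pgt (ph d a) a' := by
  have had := lt_of_typeOf_eq_H hH
  have ha'd := le_of_typeOf_eq_S hS
  have haa' : pgt a a' := by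
    rcases hC.trichotomous ha ha' with rfl | h | h
    · cases hH.symm.trans hS
    · exact h
    · exact absurd h.1 (by omega)
  refine ⟨by simp only [ph]; omega, ?_⟩
  by_contra hle
  obtain ⟨s, σ, t, hsplit, hσ⟩ := hC.exists_split_next ha ha' haa'
  have hσ' : σ.2 ≤ a'.2 ∧ a'.1 ≤ σ.1 := by
    rcases hσ with rfl | h
    · exact ⟨le_rfl, le_rfl⟩
    · exact ⟨h.2.le, h.1.le⟩
  have := haγ.2
  have := ha'γ.1
  have := hC.bounds hγ
  simp only [ph] at *
  exact hC.not_connected_of_typeOf_eq_H hH hsplit ⟨by omega, by omega⟩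

theorem IsVChain.pgt_of_mem_SCa (hC : IsVChain d v C) (hγ : γ ∈ C) (ha : a ∈ C)
    (ha' : a' ∈ C) (hT : typeOf d C a ≠ .S) (hS : typeOf d C a' = .S) (hx : x ∈ SCa d C a)
    (hxq : pgt x (qCa d C γ)) (ha'q : pgt a' (qCa d C γ)) : pgt x a' := by
  rw [qCa_of_typeOf_eq_S (hC.typeOf_eq_S_of_pgt_qCa hγ hS ha'q)] at hxq ha'q
  have pv_pgt : pgt (pv d a) a' := by
    have haa' : pgt a a' := by
      rcases hC.trichotomous ha ha' with rfl | h | h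
      · exact absurd hS hT
      · exact h
      · exact absurd (hC.typeOf_eq_S_of_pgt ha' ha h hS) hT
    have := hC.bounds ha
    have := le_of_typeOf_eq_S hS
    exact ⟨by simp only [pv, star]; omega, haa'.2⟩
  cases hTa : typeOf d C a
  · rw [SCa_of_typeOf_eq_V hTa, Multiset.mem_singleton] at hx
    exact hx ▸ pv_pgt
  · rw [SCa_of_typeOf_eq_H hTa] at hx
    rcases (by simpa using hx : x = pv d a ∨ x = ph d a) with rfl | rfl
    · exact pv_pgt
    · exact hC.ph_pgt_of_typeOf_eq_S hγ ha ha' hTa hS hxq ha'q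
  · exact absurd hTa hT

theorem IsVChain.isChain_above_qCa (hC : IsVChain d v C) (hγ : γ ∈ C) :
    IsChain pgt (above (SC d C) (qCa d C γ) : Set (ℕ × ℕ)) := by
  intro x hx y hy hxy
  simp only [above, Finset.coe_filter, Multiset.mem_toFinset, mem_SC, Set.mem_ofPred_eq] at hx hy
  obtain ⟨⟨a, ha, hxa⟩, hxq⟩ := hx
  obtain ⟨⟨a', ha', hya⟩, hyq⟩ := hy
  by_cases hTa : typeOf d C a = .S <;> by_cases hTa' : typeOf d C a' = .S
  · obtain rfl := hC.eq_of_mem_SCa_of_pgt_qCa hγ ha hTa hxa hxq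
    obtain rfl := hC.eq_of_mem_SCa_of_pgt_qCa hγ ha' hTa' hya hyq
    exact (hC.trichotomous ha ha').resolve_left hxy
  · obtain rfl := hC.eq_of_mem_SCa_of_pgt_qCa hγ ha hTa hxa hxq
    exact Or.inr (hC.pgt_of_mem_SCa hγ ha' ha hTa' hTa hya hyq hxq)
  · obtain rfl := hC.eq_of_mem_SCa_of_pgt_qCa hγ ha' hTa' hya hyq
    exact Or.inl (hC.pgt_of_mem_SCa hγ ha ha' hTa hTa' hxa hxq hyq)
  · exact (pgt_trichotomous_of_add_eq ((hC.add_eq_of_mem_SCa ha hTa hxa).trans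
      (hC.add_eq_of_mem_SCa ha' hTa' hya).symm)).resolve_left hxy

theorem IsVChain.qCa_pgt_qCa {β : ℕ × ℕ} (hC : IsVChain d v C) (hβ : β ∈ C) (hγ : γ ∈ C)
    (h : pgt β γ) : pgt (qCa d C β) (qCa d C γ) := by
  refine ⟨?_, by simpa only [qCa_snd] using h.2⟩
  have := hC.bounds hβ
  by_cases hSβ : typeOf d C β = .S
  · rw [qCa_of_typeOf_eq_S hSβ, qCa_of_typeOf_eq_S (hC.typeOf_eq_S_of_pgt hβ hγ h hSβ)]
    exact h.1
  · have := hC.bounds hγ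
    have := h.2
    rw [qCa_of_typeOf_ne_S hSβ]
    by_cases hSγ : typeOf d C γ = .S
    · rw [qCa_of_typeOf_eq_S hSγ]; simp only [pv, star]; omega
    · rw [qCa_of_typeOf_ne_S hSγ]; simp only [pv, star]; omega

end SC

end OG

open OG in
theorem stmt9_general (d : ℕ) (v : Finset ℕ)
    (C : List (ℕ × ℕ)) (hC : IsVChain d v C) (β γ : ℕ × ℕ)
    (hβ : β ∈ C) (hγ : γ ∈ C) (hbg : pgt β γ)
    (E : List (ℕ × ℕ)) (hE : IsChainIn (SC d C) E)
    (hlast : E.getLast? = some (qCa d C γ)) (hlen : E.length = odepthC d C γ) :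
    qCa d C β ∈ E :=
  hE.mem_of_mem_above (qCa_mem_SC hγ) (hC.isChain_above_qCa hγ) hlast hlen <|
    Finset.mem_filter.2 ⟨Multiset.mem_toFinset.2 (qCa_mem_SC hβ), hC.qCa_pgt_qCa hβ hγ hbg⟩

open OG in
/-- if `β > γ` in a `v`-chain `C` and `E` is a strictly decreasing chain
in `𝔖_C` with last element `q_{C,γ}` and length `odepth_C(γ)`, then `q_{C,β}` occurs
in `E`. -/
theorem stmt9 (d : ℕ) (hd : 0 < d) (v : Finset ℕ) (hv : v ∈ Iset d)
    (C : List (ℕ × ℕ)) (hC : IsVChain d v C) (β γ : ℕ × ℕ)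
    (hβ : β ∈ C) (hγ : γ ∈ C) (hbg : pgt β γ)
    (E : List (ℕ × ℕ)) (hE : IsChainIn (SC d C) E)
    (hlast : E.getLast? = some (qCa d C γ)) (hlen : E.length = odepthC d C γ) :
    qCa d C β ∈ E :=
  stmt9_general d v C hC β γ hβ hγ hbg E hE hlast hlen
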